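/- For every nonnegative integer n and positive integer p, Bel^{(p)}_{n,λ} = p Σ_{m=0}^{n} Σ_{l=0}^{m} C(n,m) (-1)^l/(p+l) · S_{2,λ}(m,l) · Bel_{n-m,λ}, where Bel_{j,λ} = Σ_{k=0}^{j} S_{2,λ}(j,k). -/

import Mathlib

open Finset

def degFall (l x : ℝ) (n : ℕ) : ℝ := ∏ i ∈ Finset.range n, (x - i * l)

def fall (x : ℝ) (n : ℕ) : ℝ := ∏ i ∈ Finset.range n, (x - i)

/-!
Writing `1 / C(k+p, k) = p * ∑ i, (-1)^i C(k,i) / (p+i)` (a Beta integral), the claim reduces to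
`∑ K, S(n,K) C(K,i) = ∑ m, C(n,m) S(m,i) Bel(n-m)`. Both sides come from expanding `(x+y)_{n,λ}` in
the basis `(x)_i (y)_k`: once via `∑ K, S(n,K) (x+y)_K` and Vandermonde's identity for `(x+y)_K`,
once via the degenerate binomial theorem `(x+y)_{n,λ} = ∑ m, C(n,m) (x)_{m,λ} (y)_{n-m,λ}`.
Comparing coefficients of `(x)_i` and then applying the linear functional `(y)_k ↦ 1`, which sends
`(y)_{j,λ}` to `Bel(j)`, gives the identity.
-/

open Nat

lemma fall_eq_degFall_one (x : ℝ) (n : ℕ) : fall x n = degFall 1 x n := by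
  simp [fall, degFall]

lemma fall_natCast (m k : ℕ) : fall m k = m.descFactorial k := by
  rw [fall, ← descPochhammer_eval_eq_prod_range, descPochhammer_eval_eq_descFactorial]

lemma degFall_succ (l x : ℝ) (n : ℕ) : degFall l x (n + 1) = degFall l x n * (x - n * l) :=
  prod_range_succ _ _

theorem degFall_add (l x y : ℝ) (n : ℕ) :
    degFall l (x + y) n =
      ∑ m ∈ range (n + 1), (n.choose m : ℝ) * (degFall l x m * degFall l y (n - m)) := by
  induction n with
  | zero => simp [degFall]
  | succ n ih =>
    rw [sum_choose_succ_mul (fun i j => degFall l x i * degFall l y j), degFall_succ, ih,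
      sum_mul, ← sum_add_distrib]
    refine sum_congr rfl fun m hm => ?_
    have hmn : m ≤ n := Nat.lt_succ_iff.mp (mem_range.mp hm)
    rw [Nat.succ_sub hmn, degFall_succ, degFall_succ, Nat.cast_sub hmn]
    ring

theorem fall_add (x y : ℝ) (n : ℕ) :
    fall (x + y) n = ∑ m ∈ range (n + 1), (n.choose m : ℝ) * (fall x m * fall y (n - m)) := by
  simpa only [fall_eq_degFall_one] using degFall_add 1 x y n

theorem eq_zero_of_forall_sum_mul_fall_eq_zero {N : ℕ} {a : ℕ → ℝ}
    (h : ∀ y : ℝ, ∑ k ∈ range N, a k * fall y k = 0) {k : ℕ} (hk : k < N) : a k = 0 := by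
  induction k using Nat.strong_induction_on with
  | _ k ih =>
    -- at `y = k` the terms `j > k` vanish and those with `j < k` have zero coefficient
    have hk' := h k
    rw [sum_eq_single k (fun j _ hjk => ?_) (fun hkN => absurd (mem_range.2 hk) hkN),
      fall_natCast, Nat.descFactorial_self] at hk'
    · exact (mul_eq_zero.mp hk').resolve_right (by positivity)
    · rcases hjk.lt_or_gt with hjk | hjk
      · rw [ih j hjk (hjk.trans hk), zero_mul]
      · rw [fall_natCast, Nat.descFactorial_eq_zero_iff_lt.mpr hjk, Nat.cast_zero, mul_zero]

lemma sum_mul_fall_eq_sum_fiberwise {ι : Type*} (s : Finset ι) (a : ι → ℝ) {σ : ι → ℕ} {N : ℕ}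
    (hN : ∀ i ∈ s, σ i < N) (y : ℝ) :
    ∑ i ∈ s, a i * fall y (σ i) = ∑ k ∈ range N, (∑ i ∈ s with σ i = k, a i) * fall y k := by
  rw [← sum_fiberwise_of_maps_to (fun i hi => mem_range.2 (hN i hi))]
  refine sum_congr rfl fun k _ => ?_
  rw [sum_mul]
  exact sum_congr rfl fun i hi => by rw [(mem_filter.1 hi).2]

/-- The linear functional sending every falling factorial `fall y k` to `1` is well defined. -/
theorem sum_eq_sum_of_forall_sum_mul_fall_eq {ι κ : Type*} {s : Finset ι} {t : Finset κ}
    {a : ι → ℝ} {b : κ → ℝ} {σ : ι → ℕ} {τ : κ → ℕ}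
    (h : ∀ y : ℝ, ∑ i ∈ s, a i * fall y (σ i) = ∑ j ∈ t, b j * fall y (τ j)) :
    ∑ i ∈ s, a i = ∑ j ∈ t, b j := by
  set N := s.sup σ ⊔ t.sup τ + 1
  have hσ : ∀ i ∈ s, σ i < N := fun i hi => Nat.lt_succ_of_le (le_sup_of_le_left (le_sup hi))
  have hτ : ∀ j ∈ t, τ j < N := fun j hj => Nat.lt_succ_of_le (le_sup_of_le_right (le_sup hj))
  have hfiber : ∀ k < N, ∑ i ∈ s with σ i = k, a i - ∑ j ∈ t with τ j = k, b j = 0 :=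
    fun k hk => eq_zero_of_forall_sum_mul_fall_eq_zero
      (a := fun k => ∑ i ∈ s with σ i = k, a i - ∑ j ∈ t with τ j = k, b j) (fun y => by
      simp only [sub_mul, sum_sub_distrib, ← sum_mul_fall_eq_sum_fiberwise _ _ hσ,
        ← sum_mul_fall_eq_sum_fiberwise _ _ hτ, h y, sub_self]) hk
  rw [← sum_fiberwise_of_maps_to (fun i hi => mem_range.2 (hσ i hi)),
    ← sum_fiberwise_of_maps_to (fun j hj => mem_range.2 (hτ j hj))]
  exact sum_congr rfl fun k hk => sub_eq_zero.mp (hfiber k (mem_range.mp hk))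

lemma sum_range_sum_range_succ_comm {M : Type*} [AddCommMonoid M] (n : ℕ) (f : ℕ → ℕ → M) :
    ∑ K ∈ range (n + 1), ∑ i ∈ range (K + 1), f K i =
      ∑ i ∈ range (n + 1), ∑ K ∈ Ico i (n + 1), f K i := by
  simpa only [range_eq_Ico] using (sum_Ico_Ico_comm 0 (n + 1) fun i K => f K i).symm

theorem sum_range_choose_mul_neg_one_pow_div (k : ℕ) {x : ℝ} (hx : ∀ i : ℕ, x + i ≠ 0) :
    ∑ i ∈ range (k + 1), (k.choose i : ℝ) * ((-1) ^ i / (x + i)) =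
      k ! / ∏ i ∈ range (k + 1), (x + i) := by
  induction k generalizing x with
  | zero => simp
  | succ k ih =>
    have hx1 : ∀ i : ℕ, x + 1 + i ≠ 0 := fun i => by
      convert hx (i + 1) using 1; push_cast; ring
    have hsplit := sum_choose_succ_mul (fun i (_ : ℕ) => (-1 : ℝ) ^ i / (x + i)) k
    have hshift : ∑ i ∈ range (k + 1), (k.choose i : ℝ) * ((-1) ^ (i + 1) / (x + (i + 1 : ℕ))) =
        -∑ i ∈ range (k + 1), (k.choose i : ℝ) * ((-1) ^ i / (x + 1 + i)) := by
      rw [← sum_neg_distrib]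
      refine sum_congr rfl fun i _ => ?_
      push_cast; ring
    have hshiftprod : ∀ m, ∏ i ∈ range m, (x + (i + 1 : ℕ)) = ∏ i ∈ range m, (x + 1 + i) :=
      fun m => prod_congr rfl fun i _ => by push_cast; ring
    rw [hsplit, hshift, ih hx, ih hx1, prod_range_succ', prod_range_succ' _ (k + 1), hshiftprod,
      hshiftprod, prod_range_succ _ k]
    have hQ : ∏ i ∈ range k, (x + 1 + i) ≠ 0 := prod_ne_zero_iff.mpr fun i _ => hx1 i
    have hx0 := hx 0
    have hxk := hx1 k
    push_cast [Nat.factorial_succ] at hx0 ⊢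
    field_simp
    ring

theorem inv_choose_add_eq_mul_sum (k p : ℕ) (hp : 0 < p) :
    (((k + p).choose k : ℕ) : ℝ)⁻¹ =
      p * ∑ i ∈ range (k + 1), (k.choose i : ℝ) * ((-1) ^ i / (p + i)) := by
  have hprod : ∏ i ∈ range (k + 1), ((p : ℝ) + i) = p * (k ! * (k + p).choose k) := by
    have h := congrArg (Nat.cast : ℕ → ℝ)
      ((ascFactorial_eq_prod_range (p + 1) k).symm.trans (ascFactorial_eq_factorial_mul_choose p k))
    push_cast at h
    rw [prod_range_succ', Nat.cast_zero, add_zero, mul_comm, add_comm k p, ← h]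
    exact congrArg _ (prod_congr rfl fun i _ => by push_cast; ring)
  rw [sum_range_choose_mul_neg_one_pow_div k (fun i => by positivity), hprod]
  have : ((k + p).choose k : ℝ) ≠ 0 :=
    Nat.cast_ne_zero.mpr (Nat.choose_pos (Nat.le_add_right k p)).ne'
  field_simp

/-- Only the values `S2 m k` with `k ≤ m` are pinned down by this condition. -/
def IsDegStirling2 (l : ℝ) (S2 : ℕ → ℕ → ℝ) : Prop :=
  ∀ (y : ℝ) (m : ℕ), degFall l y m = ∑ k ∈ range (m + 1), S2 m k * fall y k

namespace IsDegStirling2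

variable {l : ℝ} {S2 : ℕ → ℕ → ℝ}

lemma fall_expansions_degFall_add (hS : IsDegStirling2 l S2) (n : ℕ) (x y : ℝ) :
    ∑ i ∈ range (n + 1), (∑ K ∈ Ico i (n + 1), S2 n K * K.choose i * fall y (K - i)) * fall x i =
      ∑ i ∈ range (n + 1),
        (∑ m ∈ Ico i (n + 1), n.choose m * S2 m i * degFall l y (n - m)) * fall x i := by
  calc _ = ∑ K ∈ range (n + 1), S2 n K * fall (x + y) K := by
        simp only [fall_add, mul_sum, sum_mul, ← sum_range_sum_range_succ_comm]
        exact sum_congr rfl fun K _ => sum_congr rfl fun i _ => by ring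
    _ = ∑ m ∈ range (n + 1), n.choose m * (degFall l x m * degFall l y (n - m)) := by
        rw [← hS, degFall_add]
    _ = _ := by
        simp only [hS x, sum_mul, mul_sum, ← sum_range_sum_range_succ_comm]
        exact sum_congr rfl fun m _ => sum_congr rfl fun i _ => by ring

theorem sum_mul_choose (hS : IsDegStirling2 l S2) (n i : ℕ) :
    ∑ K ∈ Ico i (n + 1), S2 n K * K.choose i =
      ∑ m ∈ Ico i (n + 1), n.choose m * S2 m i * ∑ k ∈ range (n - m + 1), S2 (n - m) k := by
  rcases lt_or_ge n i with hni | hin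
  · simp [Ico_eq_empty_of_le (Nat.succ_le_of_lt hni)]
  have hy : ∀ y, ∑ K ∈ Ico i (n + 1), S2 n K * K.choose i * fall y (K - i) =
      ∑ m ∈ Ico i (n + 1), n.choose m * S2 m i * degFall l y (n - m) := fun y =>
    sub_eq_zero.mp (eq_zero_of_forall_sum_mul_fall_eq_zero
      (a := fun i => ∑ K ∈ Ico i (n + 1), S2 n K * K.choose i * fall y (K - i) -
        ∑ m ∈ Ico i (n + 1), n.choose m * S2 m i * degFall l y (n - m))
      (fun x => by simp only [sub_mul, sum_sub_distrib, hS.fall_expansions_degFall_add, sub_self])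
      (Nat.lt_succ_of_le hin))
  simp only [mul_sum]
  rw [sum_sigma']
  refine sum_eq_sum_of_forall_sum_mul_fall_eq (σ := fun K => K - i) (τ := fun mk => mk.2)
    fun y => ?_
  rw [hy, sum_sigma]
  simp only [hS y, mul_sum, mul_assoc]

end IsDegStirling2

theorem truncated_degenerate_Bell_via_Bell_numbers
    (l : ℝ) (n p : ℕ) (hp : 0 < p) (S2 : ℕ → ℕ → ℝ)
    (hS : ∀ (y : ℝ) (m : ℕ),
      degFall l y m = ∑ k ∈ Finset.range (m + 1), S2 m k * fall y k) :
    (∑ k ∈ Finset.range (n + 1), S2 n k / (((k + p).choose k : ℕ) : ℝ))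
      = (p : ℝ) * ∑ m ∈ Finset.range (n + 1), ∑ l' ∈ Finset.range (m + 1),
          ((n.choose m : ℕ) : ℝ) * ((-1 : ℝ) ^ l' / ((p + l' : ℕ) : ℝ)) * S2 m l' *
            (∑ k ∈ Finset.range (n - m + 1), S2 (n - m) k) := by
  calc ∑ k ∈ range (n + 1), S2 n k / (((k + p).choose k : ℕ) : ℝ)
      = p * ∑ k ∈ range (n + 1), ∑ i ∈ range (k + 1),
          (-1) ^ i / (p + i) * (S2 n k * k.choose i) := by
        simp only [div_eq_mul_inv, inv_choose_add_eq_mul_sum _ _ hp, mul_sum]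
        exact sum_congr rfl fun k _ => sum_congr rfl fun i _ => by ring
    _ = p * ∑ i ∈ range (n + 1),
          (-1) ^ i / (p + i) * ∑ K ∈ Ico i (n + 1), S2 n K * K.choose i := by
        simp only [sum_range_sum_range_succ_comm, mul_sum]
    _ = _ := by
        simp only [IsDegStirling2.sum_mul_choose hS, mul_sum (Ico _ _),
          ← sum_range_sum_range_succ_comm]
        push_cast
        exact congrArg _ (sum_congr rfl fun m _ => sum_congr rfl fun i _ => by ring)
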